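/- Let D be the set of density matrices on an n-dimensional complex Hilbert space and let T : D × D → ℝ be any function such that (i) T(ρ,σ) ≥ 0 for all ρ,σ ∈ D, (ii) T(ρ,ρ) = 0 for all ρ ∈ D, and (iii) for each fixed σ ∈ D, the map ρ ↦ T(ρ,σ) is concave on D. Then T(ρ₁,ρ) = 0 for every positive definite density matrix ρ and every density matrix ρ₁. In particular, no quantum conditional entropy of two density matrices can simultaneously be non-negative, vanish on the diagonal, and be concave in its first argument without vanishing identically on pairs whose second entry is positive definite. -/

import Mathlib

open Matrix
open scoped ComplexOrder

/-- `η(A) = −∑ᵢ λᵢ ln λᵢ` where the `λᵢ` are the eigenvalues of the Hermitian matrix `A`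
listed with multiplicity (with the convention `0 · ln 0 = 0`, which holds automatically
since `Real.log 0 = 0`). -/
noncomputable def eta {n : ℕ} (A : Matrix (Fin n) (Fin n) ℂ) : ℝ :=
  if h : A.IsHermitian then -∑ i, h.eigenvalues i * Real.log (h.eigenvalues i) else 0

/-- `F(ρ, Q) = η(QρQ) + tr(QρQ)·ln tr(QρQ)`. -/
noncomputable def condF {n : ℕ} (ρ Q : Matrix (Fin n) (Fin n) ℂ) : ℝ :=
  eta (Q * ρ * Q) + (Q * ρ * Q).trace.re * Real.log (Q * ρ * Q).trace.re

/-- The orthogonal projection onto the eigenspace of a Hermitian matrix for the value `c`. -/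
noncomputable def eigProj {n : ℕ} {σ : Matrix (Fin n) (Fin n) ℂ} (h : σ.IsHermitian) (c : ℝ) :
    Matrix (Fin n) (Fin n) ℂ :=
  (h.eigenvectorUnitary : Matrix (Fin n) (Fin n) ℂ) *
    Matrix.diagonal (fun i => if h.eigenvalues i = c then (1 : ℂ) else 0) *
    star (h.eigenvectorUnitary : Matrix (Fin n) (Fin n) ℂ)

/-- The conditional entropy `S(ρ|σ) = ∑ⱼ tr(Qⱼ σ) · F(ρ, Qⱼ)`, the sum running over the
distinct eigenvalues `σⱼ` of `σ`, with `Qⱼ` the corresponding eigenprojections. -/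
noncomputable def condS {n : ℕ} (ρ σ : Matrix (Fin n) (Fin n) ℂ) : ℝ :=
  if h : σ.IsHermitian then
    ∑ c ∈ Finset.image h.eigenvalues Finset.univ,
      (eigProj h c * σ).trace.re * condF ρ (eigProj h c)
  else 0

lemma trace_eq_sum_eig {n : ℕ} {A : Matrix (Fin n) (Fin n) ℂ} (hA : A.IsHermitian) :
    A.trace = ∑ i, (hA.eigenvalues i : ℂ) := by
  conv_lhs => rw [hA.spectral_theorem]; simp only [Unitary.conjStarAlgAut_apply, Unitary.coe_star]
  rw [Matrix.trace_mul_cycle]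
  have h1 : (star (hA.eigenvectorUnitary : Matrix (Fin n) (Fin n) ℂ)) *
      (hA.eigenvectorUnitary : Matrix (Fin n) (Fin n) ℂ) = 1 :=
    Matrix.mem_unitaryGroup_iff'.mp hA.eigenvectorUnitary.2
  rw [h1, one_mul, Matrix.trace_diagonal]
  rfl

lemma smul_one_sub_psd {n : ℕ} {A : Matrix (Fin n) (Fin n) ℂ} (hA : A.IsHermitian) (c : ℝ)
    (h : ∀ i, hA.eigenvalues i ≤ c) : ((c : ℂ) • 1 - A).PosSemidef := by
  have hU : (hA.eigenvectorUnitary : Matrix (Fin n) (Fin n) ℂ) *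
      (star (hA.eigenvectorUnitary : Matrix (Fin n) (Fin n) ℂ)) = 1 :=
    Matrix.mem_unitaryGroup_iff.mp hA.eigenvectorUnitary.2
  have key : (c : ℂ) • 1 - A =
      (hA.eigenvectorUnitary : Matrix (Fin n) (Fin n) ℂ) *
        Matrix.diagonal (fun i => ((c - hA.eigenvalues i : ℝ) : ℂ)) *
        (star (hA.eigenvectorUnitary : Matrix (Fin n) (Fin n) ℂ)) := by
    have hd : Matrix.diagonal (fun i => ((c - hA.eigenvalues i : ℝ) : ℂ)) =
        (c : ℂ) • 1 - Matrix.diagonal (RCLike.ofReal ∘ hA.eigenvalues) := by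
      ext i j
      by_cases hij : i = j
      · subst hij
        simp [Matrix.one_apply]
      · simp [Matrix.diagonal_apply_ne _ hij, Matrix.one_apply_ne hij]
    rw [hd, Matrix.mul_sub, Matrix.sub_mul]
    conv_lhs => rw [hA.spectral_theorem]; simp only [Unitary.conjStarAlgAut_apply, Unitary.coe_star]
    congr 1
    rw [Matrix.mul_smul, Matrix.smul_mul, mul_one, hU]
  rw [key]
  exact (Matrix.posSemidef_diagonal_iff.mpr fun i => by
    simpa [Complex.zero_le_real] using sub_nonneg.mpr (h i)).mul_mul_conjTranspose_same _

lemma sub_smul_one_psd {n : ℕ} {A : Matrix (Fin n) (Fin n) ℂ} (hA : A.IsHermitian) (c : ℝ)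
    (h : ∀ i, c ≤ hA.eigenvalues i) : (A - (c : ℂ) • 1).PosSemidef := by
  have hU : (hA.eigenvectorUnitary : Matrix (Fin n) (Fin n) ℂ) *
      (star (hA.eigenvectorUnitary : Matrix (Fin n) (Fin n) ℂ)) = 1 :=
    Matrix.mem_unitaryGroup_iff.mp hA.eigenvectorUnitary.2
  have key : A - (c : ℂ) • 1 =
      (hA.eigenvectorUnitary : Matrix (Fin n) (Fin n) ℂ) *
        Matrix.diagonal (fun i => ((hA.eigenvalues i - c : ℝ) : ℂ)) *
        (star (hA.eigenvectorUnitary : Matrix (Fin n) (Fin n) ℂ)) := by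
    have hd : Matrix.diagonal (fun i => ((hA.eigenvalues i - c : ℝ) : ℂ)) =
        Matrix.diagonal (RCLike.ofReal ∘ hA.eigenvalues) - (c : ℂ) • 1 := by
      ext i j
      by_cases hij : i = j
      · subst hij
        simp [Matrix.one_apply]
      · simp [Matrix.diagonal_apply_ne _ hij, Matrix.one_apply_ne hij]
    rw [hd, Matrix.mul_sub, Matrix.sub_mul]
    conv_lhs => rw [hA.spectral_theorem]; simp only [Unitary.conjStarAlgAut_apply, Unitary.coe_star]
    congr 1
    rw [Matrix.mul_smul, Matrix.smul_mul, mul_one, hU]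
  rw [key]
  exact (Matrix.posSemidef_diagonal_iff.mpr fun i => by
    simpa [Complex.zero_le_real] using sub_nonneg.mpr (h i)).mul_mul_conjTranspose_same _

lemma psd_real_smul {n : ℕ} {A : Matrix (Fin n) (Fin n) ℂ} (hA : A.PosSemidef) {c : ℝ}
    (hc : 0 ≤ c) : ((c : ℂ) • A).PosSemidef := by
  refine ⟨?_, fun x => ?_⟩
  · unfold Matrix.IsHermitian
    rw [Matrix.conjTranspose_smul, hA.1.eq]
    congr 1
    simp [Complex.star_def, Complex.conj_ofReal]
  · exact (hA.smul (a := (c : ℂ)) (by simpa [Complex.zero_le_real] using hc)).2 x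


/-- A function `T` on pairs of density matrices which is non-negative,
vanishes on the diagonal and is concave in its first argument must vanish at `(ρ₁, ρ)` for
every positive definite density matrix `ρ` and every density matrix `ρ₁`. -/
theorem no_good_conditional_entropy {n : ℕ} (hn : 1 ≤ n)
    (T : Matrix (Fin n) (Fin n) ℂ → Matrix (Fin n) (Fin n) ℂ → ℝ)
    (hnonneg : ∀ ρ σ : Matrix (Fin n) (Fin n) ℂ, ρ.PosSemidef → ρ.trace = 1 →
      σ.PosSemidef → σ.trace = 1 → 0 ≤ T ρ σ)
    (hdiag : ∀ ρ : Matrix (Fin n) (Fin n) ℂ, ρ.PosSemidef → ρ.trace = 1 → T ρ ρ = 0)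
    (hconc : ∀ σ : Matrix (Fin n) (Fin n) ℂ, σ.PosSemidef → σ.trace = 1 →
      ∀ ρ₁ ρ₂ : Matrix (Fin n) (Fin n) ℂ, ρ₁.PosSemidef → ρ₁.trace = 1 →
      ρ₂.PosSemidef → ρ₂.trace = 1 → ∀ t : ℝ, 0 ≤ t → t ≤ 1 →
      t * T ρ₁ σ + (1 - t) * T ρ₂ σ ≤ T (t • ρ₁ + (1 - t) • ρ₂) σ)
    (ρ ρ₁ : Matrix (Fin n) (Fin n) ℂ)
    (hρ : ρ.PosDef) (hρ1 : ρ.trace = 1)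
    (hρ₁ : ρ₁.PosSemidef) (hρ₁1 : ρ₁.trace = 1) :
    T ρ₁ ρ = 0 := by
  have hne : (Finset.univ : Finset (Fin n)).Nonempty := ⟨⟨0, hn⟩, Finset.mem_univ _⟩
  set ε := Finset.univ.inf' hne hρ.1.eigenvalues with hεdef
  have hε : 0 < ε := (Finset.lt_inf'_iff hne).mpr fun i _ => hρ.eigenvalues_pos i
  set t := min ε 1 / 2 with htdef
  have ht0 : 0 < t := by positivity
  have ht1 : t < 1 := by
    have : min ε 1 ≤ 1 := min_le_right _ _
    simp only [htdef]; linarith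
  have htε : t ≤ ε := by
    have h1 : min ε 1 ≤ ε := min_le_left _ _
    have h2 : 0 ≤ min ε 1 := le_min hε.le zero_le_one
    simp only [htdef]; linarith
  -- eigenvalues of ρ₁ are at most 1
  have hsum : ∑ i, hρ₁.1.eigenvalues i = 1 := by
    have h2 : ((∑ i, hρ₁.1.eigenvalues i : ℝ) : ℂ) = 1 := by
      push_cast
      rw [← trace_eq_sum_eig hρ₁.1]
      exact hρ₁1
    exact_mod_cast h2
  have hle1 : ∀ i, hρ₁.1.eigenvalues i ≤ 1 := fun i => by
    rw [← hsum]
    exact Finset.single_le_sum (fun j _ => hρ₁.eigenvalues_nonneg j) (Finset.mem_univ i)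
  have hB : ((1 : ℂ) • 1 - ρ₁).PosSemidef := smul_one_sub_psd hρ₁.1 1 hle1
  have hA : (ρ - (t : ℂ) • 1).PosSemidef :=
    sub_smul_one_psd hρ.1 t fun i => le_trans htε (Finset.inf'_le _ (Finset.mem_univ i))
  have hC : (ρ - (t : ℂ) • ρ₁).PosSemidef := by
    have hadd := hA.add (psd_real_smul hB ht0.le)
    have heq : (ρ - (t : ℂ) • 1) + (t : ℂ) • ((1 : ℂ) • 1 - ρ₁) = ρ - (t : ℂ) • ρ₁ := by
      rw [one_smul, smul_sub]
      abel
    rwa [heq] at hadd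
  set ρ₂ : Matrix (Fin n) (Fin n) ℂ := (((1 - t)⁻¹ : ℝ) : ℂ) • (ρ - (t : ℂ) • ρ₁) with hρ₂def
  have h1t : (0:ℝ) < 1 - t := by linarith
  have hne0 : (1 : ℂ) - (t : ℂ) ≠ 0 := by
    rw [show (1 : ℂ) - (t : ℂ) = ((1 - t : ℝ) : ℂ) by push_cast; ring]
    exact_mod_cast h1t.ne'
  have hρ₂psd : ρ₂.PosSemidef := psd_real_smul hC (by positivity)
  have htrC : (ρ - (t : ℂ) • ρ₁).trace = 1 - (t : ℂ) := by
    rw [Matrix.trace_sub, Matrix.trace_smul, hρ1, hρ₁1, smul_eq_mul, mul_one]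
  have hρ₂tr : ρ₂.trace = 1 := by
    rw [hρ₂def, Matrix.trace_smul, htrC, smul_eq_mul]
    rw [show (((1 - t)⁻¹ : ℝ) : ℂ) = ((1 - t : ℝ) : ℂ)⁻¹ by push_cast; ring]
    push_cast
    field_simp

  have hcomb : t • ρ₁ + (1 - t) • ρ₂ = ρ := by
    have hr : ∀ (r : ℝ) (M : Matrix (Fin n) (Fin n) ℂ), r • M = ((r : ℂ)) • M := by
      intro r M; ext i j; simp [Complex.real_smul]
    rw [hr, hr, hρ₂def, smul_smul]
    rw [show ((1 - t : ℝ) : ℂ) * (((1 - t)⁻¹ : ℝ) : ℂ) = 1 by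
      push_cast; field_simp]
    rw [one_smul]
    abel
  have hkey := hconc ρ hρ.posSemidef hρ1 ρ₁ ρ₂ hρ₁ hρ₁1 hρ₂psd hρ₂tr t ht0.le ht1.le
  rw [hcomb, hdiag ρ hρ.posSemidef hρ1] at hkey
  have h1 := hnonneg ρ₁ ρ hρ₁ hρ₁1 hρ.posSemidef hρ1
  have h2 := hnonneg ρ₂ ρ hρ₂psd hρ₂tr hρ.posSemidef hρ1
  nlinarith
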